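/- Let φ ∧ C be a CNF in the QEALM fragment with distinguished clause C. If φ ∧ C is satisfiable, then there is a component K of C such that φ ∧ K is satisfiable. -/

import Mathlib

/-- Terms over variables `V` and constant symbols `K`
(Bernays–Schönfinkel: the only function symbols are constants). -/
inductive Trm (V K : Type) : Type where
  | var : V → Trm V K
  | const : K → Trm V K
deriving DecidableEq

/-- A first-order literal (no equality): a polarity, a predicate symbol
and a list of argument terms. -/
structure Lit (V K P : Type) : Type where
  pol : Bool
  pred : P
  args : List (Trm V K)
deriving DecidableEq

/-- A clause is a (finite) set of literals, read disjunctively. -/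
abbrev Clause (V K P : Type) := Finset (Lit V K P)

/-- A CNF is a list of clauses, read conjunctively,
with all variables universally quantified. -/
abbrev CNF (V K P : Type) := List (Clause V K P)

variable {V K P : Type}

/-- The argument of a literal at the (1-based) position `i`. -/
def Lit.argAt (l : Lit V K P) : ℕ → Option (Trm V K)
  | 0 => none
  | i + 1 => l.args[i]?

/-- Variable `u` occurs at argument position `i` of the literal `l`. -/
def Lit.varAt (l : Lit V K P) (u : V) (i : ℕ) : Prop := l.argAt i = some (Trm.var u)

/-- Variable `u` occurs in the literal `l`. -/
def Lit.hasVar (l : Lit V K P) (u : V) : Prop := ∃ i, l.varAt u i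

/-- `i` is the least argument position at which `u` occurs in `l`. -/
def Lit.firstOccAt (l : Lit V K P) (u : V) (i : ℕ) : Prop :=
  l.varAt u i ∧ ∀ j, l.varAt u j → i ≤ j

/-- The QEALM clause condition: whenever a variable `u` occurs in several
literals of the clause, the least position at which it occurs is the same in
all these literals, and these literals agree on all argument positions up to
(and including) that one (a shared initial segment). -/
def QEALMClause (C : Clause V K P) : Prop :=
  ∀ (u : V), ∀ l₁ ∈ C, ∀ l₂ ∈ C, l₁.hasVar u → l₂.hasVar u →
    ∃ i, l₁.firstOccAt u i ∧ l₂.firstOccAt u i ∧ ∀ j ≤ i, l₁.argAt j = l₂.argAt j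

/-- A CNF is in the QEALM fragment iff every clause satisfies the QEALM clause condition. -/
def QEALM (φ : CNF V K P) : Prop := ∀ C ∈ φ, QEALMClause C

/-- A first-order structure for the signature `(K, P)` (no equality). -/
structure Model (K P : Type) : Type 1 where
  Dom : Type
  dne : Nonempty Dom
  constVal : K → Dom
  predVal : P → List Dom → Prop

/-- Value of a term in a model under a variable assignment. -/
def Trm.val (M : Model K P) (ρ : V → M.Dom) : Trm V K → M.Dom
  | .var u => ρ u
  | .const c => M.constVal c

/-- Truth of a literal in a model under a variable assignment. -/
def Lit.holds (M : Model K P) (ρ : V → M.Dom) (l : Lit V K P) : Prop :=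
  if l.pol then M.predVal l.pred (l.args.map (Trm.val M ρ))
  else ¬ M.predVal l.pred (l.args.map (Trm.val M ρ))

/-- Truth of a clause (a disjunction of literals). -/
def Clause.holds (M : Model K P) (ρ : V → M.Dom) (C : Clause V K P) : Prop :=
  ∃ l ∈ C, l.holds M ρ

/-- First-order satisfiability (without equality) of a universally quantified CNF. -/
def CNF.Satisfiable (φ : CNF V K P) : Prop :=
  ∃ M : Model K P, ∀ ρ : V → M.Dom, ∀ C ∈ φ, C.holds M ρ

/-- Applying a substitution to a term. -/
def Trm.subst (σ : V → Trm V K) : Trm V K → Trm V K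
  | .var u => σ u
  | .const c => .const c

/-- Applying a substitution to a literal. -/
def Lit.subst (σ : V → Trm V K) (l : Lit V K P) : Lit V K P :=
  ⟨l.pol, l.pred, l.args.map (Trm.subst σ)⟩

/-- Applying a substitution to a clause. -/
def Clause.subst [DecidableEq V] [DecidableEq K] [DecidableEq P]
    (σ : V → Trm V K) (C : Clause V K P) : Clause V K P :=
  C.image (Lit.subst σ)

/-- Applying a substitution to a CNF. -/
def CNF.subst [DecidableEq V] [DecidableEq K] [DecidableEq P]
    (σ : V → Trm V K) (φ : CNF V K P) : CNF V K P :=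
  φ.map (Clause.subst σ)

/-- An outer variable of a clause: a variable appearing in every literal of the clause. -/
def OuterVar (C : Clause V K P) (u : V) : Prop := ∀ l ∈ C, l.hasVar u

/-- `i` is the least position of an occurrence of `u` in any literal of `C`. -/
def LeastOccIn (C : Clause V K P) (u : V) (i : ℕ) : Prop :=
  (∃ l ∈ C, l.varAt u i) ∧ ∀ j, (∃ l ∈ C, l.varAt u j) → i ≤ j

/-- `i` is an outer position of the clause `C`. -/
def OuterPosClause (C : Clause V K P) (i : ℕ) : Prop :=
  ∃ u : V, OuterVar C u ∧ LeastOccIn C u i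

/-- `i` is a neutral position of the clause `C`: some term `t`, a constant or an
outer variable of `C`, occupies the `i`-th argument of every literal of `C`. -/
def NeutralPos (C : Clause V K P) (i : ℕ) : Prop :=
  ∃ t : Trm V K,
    ((∃ c, t = Trm.const c) ∨ (∃ u, t = Trm.var u ∧ OuterVar C u)) ∧
    ∀ l ∈ C, l.argAt i = some t

/-- `i` is an outer position of the CNF `φ`: an outer position of some clause and a
neutral position of every clause. -/
def OuterPosCNF (φ : CNF V K P) (i : ℕ) : Prop :=
  (∃ C ∈ φ, OuterPosClause C i) ∧ ∀ D ∈ φ, NeutralPos D i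

/-- Variable `u` occurs at argument position `i` in some literal of `φ`. -/
def VarOccursAt (φ : CNF V K P) (u : V) (i : ℕ) : Prop :=
  ∃ C ∈ φ, ∃ l ∈ C, l.varAt u i

/-- `σ` is the substitution that replaces every variable occurring at an argument
position `i` that is an outer position of `φ` by the constant `c i`, and leaves
all other variables unchanged. -/
def IsOuterSubst (φ : CNF V K P) (c : ℕ → K) (σ : V → Trm V K) : Prop :=
  (∀ u i, OuterPosCNF φ i → VarOccursAt φ u i → σ u = Trm.const (c i)) ∧
  (∀ u, (¬ ∃ i, OuterPosCNF φ i ∧ VarOccursAt φ u i) → σ u = Trm.var u)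

/-- A clause is inseparable if it is a single literal or some variable occurs in
every literal of the clause. -/
def InsepClause (C : Clause V K P) : Prop :=
  (∃ l, C = {l}) ∨ ∃ u : V, ∀ l ∈ C, l.hasVar u

/-- `Kc` is a component of a clause `C`: a non-empty inseparable subclause of `C`
closed under sharing variables with literals of `C`. -/
def IsComponent (Kc C : Clause V K P) : Prop :=
  Kc.Nonempty ∧ Kc ⊆ C ∧ InsepClause Kc ∧
    ∀ a ∈ Kc, ∀ b ∈ C, (∃ u : V, a.hasVar u ∧ b.hasVar u) → b ∈ Kc

/-- All variables shared between `l₁` and `l₂` occur as arguments in positions `≤ m`. -/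
def SharesUpTo (l₁ l₂ : Lit V K P) (m : ℕ) : Prop :=
  ∀ u : V, l₁.hasVar u → l₂.hasVar u →
    (∃ j ≤ m, l₁.varAt u j) ∧ (∃ j ≤ m, l₂.varAt u j)

/-- `i` is a fork index of `φ`: for some clause `C` of `φ` and literals `l₁, l₂` of
`C` (not necessarily distinct), `i` is the minimal value such that every variable
shared between `l₁` and `l₂` occurs at some argument position `≤ i`.  In particular,
`0` is a fork index if some such pair shares no variables. -/
def ForkIndex (φ : CNF V K P) (i : ℕ) : Prop :=
  ∃ C ∈ φ, ∃ l₁ ∈ C, ∃ l₂ ∈ C, IsLeast {m | SharesUpTo l₁ l₂ m} i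

/-
Under QEALM, two literals of a clause that share any variable have the same *first variable*
(the variable at their least variable position): the shared initial segment reaches past it.
Hence the components of `C` are its ground literals, as singletons, and, for each variable `w`,
the literals containing `w` whenever `w` is the first variable of one of them. Distinct
components have no variable in common. If `φ ∧ K` were unsatisfiable for every component `K`,
then in a model of `φ ∧ C` each component would be falsified by some assignment, and these
assignments glue to a single one falsifying all of `C`.
-/

def Lit.FirstVar (l : Lit V K P) (w : V) (p : ℕ) : Prop :=
  l.varAt w p ∧ ∀ j u, l.varAt u j → p ≤ j

noncomputable def Clause.withVar (C : Clause V K P) (w : V) : Clause V K P := by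
  classical exact C.filter (·.hasVar w)

lemma Clause.mem_withVar {C : Clause V K P} {w : V} {l : Lit V K P} :
    l ∈ C.withVar w ↔ l ∈ C ∧ l.hasVar w := by
  classical exact Finset.mem_filter

namespace Lit

lemma exists_firstVar {l : Lit V K P} {u : V} (h : l.hasVar u) : ∃ w p, l.FirstVar w p := by
  have hne : {j | ∃ v, l.varAt v j}.Nonempty := by
    obtain ⟨i, hi⟩ := h
    exact ⟨i, u, hi⟩
  obtain ⟨v, hv⟩ := Nat.sInf_mem hne
  exact ⟨v, _, hv, fun j u' hj => Nat.sInf_le ⟨u', hj⟩⟩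

lemma FirstVar.unique {l : Lit V K P} {w w' : V} {p p' : ℕ}
    (h : l.FirstVar w p) (h' : l.FirstVar w' p') : w = w' ∧ p = p' := by
  obtain rfl : p = p' := le_antisymm (h.2 _ _ h'.1) (h'.2 _ _ h.1)
  have hw : some (Trm.var w : Trm V K) = some (Trm.var w') := h.1.symm.trans h'.1
  simp only [Option.some.injEq, Trm.var.injEq] at hw
  exact ⟨hw, rfl⟩

lemma FirstVar.hasVar {l : Lit V K P} {w : V} {p : ℕ} (h : l.FirstVar w p) : l.hasVar w :=
  ⟨p, h.1⟩

lemma holds_congr (M : Model K P) {ρ ρ' : V → M.Dom} {l : Lit V K P}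
    (h : ∀ u, l.hasVar u → ρ u = ρ' u) : l.holds M ρ ↔ l.holds M ρ' := by
  have hargs : l.args.map (Trm.val M ρ) = l.args.map (Trm.val M ρ') := by
    refine List.map_congr_left fun t ht => ?_
    obtain ⟨i, hi, rfl⟩ := List.mem_iff_getElem.mp ht
    cases hti : l.args[i] with
    | const c => rfl
    | var u => exact h u ⟨i + 1, List.getElem?_eq_some_iff.mpr ⟨hi, hti⟩⟩
  simp only [Lit.holds, hargs]

end Lit

namespace QEALMClause

variable {C : Clause V K P}

lemma exists_common_firstVar (hq : QEALMClause C) {a b : Lit V K P} (ha : a ∈ C) (hb : b ∈ C)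
    {u : V} (hau : a.hasVar u) (hbu : b.hasVar u) : ∃ w p, a.FirstVar w p ∧ b.FirstVar w p := by
  obtain ⟨i, hfa, hfb, hagree⟩ := hq u a ha b hb hau hbu
  obtain ⟨w, p, hwp⟩ := Lit.exists_firstVar hau
  obtain ⟨w', p', hwp'⟩ := Lit.exists_firstVar hbu
  have hbp : b.varAt w p := (hagree p (hwp.2 _ _ hfa.1)).symm.trans hwp.1
  have hap' : a.varAt w' p' := (hagree p' (hwp'.2 _ _ hfb.1)).trans hwp'.1
  obtain rfl : p = p' := le_antisymm (hwp.2 _ _ hap') (hwp'.2 _ _ hbp)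
  exact ⟨w, p, hwp, hbp, hwp'.2⟩

lemma firstVar_eq (hq : QEALMClause C) {a b : Lit V K P} (ha : a ∈ C) (hb : b ∈ C)
    {u w w' : V} {p p' : ℕ} (hau : a.hasVar u) (hbu : b.hasVar u)
    (haw : a.FirstVar w p) (hbw : b.FirstVar w' p') : w = w' := by
  obtain ⟨w₀, p₀, ha₀, hb₀⟩ := hq.exists_common_firstVar ha hb hau hbu
  exact (haw.unique ha₀).1.trans (hb₀.unique hbw).1

lemma isComponent_withVar (hq : QEALMClause C) {a : Lit V K P} (ha : a ∈ C) {w : V} {p : ℕ}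
    (haw : a.FirstVar w p) :
    IsComponent (C.withVar w) C := by
  refine ⟨⟨a, Clause.mem_withVar.mpr ⟨ha, haw.hasVar⟩⟩, fun l hl => (Clause.mem_withVar.mp hl).1,
    Or.inr ⟨w, fun l hl => (Clause.mem_withVar.mp hl).2⟩, ?_⟩
  rintro x hx b hb ⟨u, hxu, hbu⟩
  obtain ⟨hxC, hxw⟩ := Clause.mem_withVar.mp hx
  obtain ⟨w₁, p₁, hx₁, hb₁⟩ := hq.exists_common_firstVar hxC hb hxu hbu
  obtain rfl : w₁ = w := hq.firstVar_eq hxC ha hxw haw.hasVar hx₁ haw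
  exact Clause.mem_withVar.mpr ⟨hb, hb₁.hasVar⟩

lemma exists_not_holds_of_forall_isComponent (hq : QEALMClause C) (M : Model K P)
    (hK : ∀ Kc, IsComponent Kc C → ∃ ρ : V → M.Dom, ¬ Kc.holds M ρ) :
    ∃ ρ : V → M.Dom, ¬ C.holds M ρ := by
  have hρw : ∀ w : V, ∃ ρ : V → M.Dom,
      IsComponent (C.withVar w) C → ¬ (C.withVar w).holds M ρ := by
    intro w
    by_cases hw : IsComponent (C.withVar w) C
    · obtain ⟨ρ, hρ⟩ := hK _ hw
      exact ⟨ρ, fun _ => hρ⟩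
    · exact ⟨fun _ => Classical.choice M.dne, fun h => absurd h hw⟩
  choose ρw hρw using hρw
  -- At `u`, copy the assignment chosen for the component of the literals containing `u`.
  have hglue : ∀ u : V, ∃ x : M.Dom,
      ∀ a ∈ C, a.hasVar u → ∀ w p, a.FirstVar w p → x = ρw w u := by
    intro u
    by_cases hu : ∃ a ∈ C, a.hasVar u
    · obtain ⟨a₀, ha₀, ha₀u⟩ := hu
      obtain ⟨w₀, p₀, ha₀w⟩ := Lit.exists_firstVar ha₀u
      refine ⟨ρw w₀ u, fun a ha hau w p haw => ?_⟩
      rw [hq.firstVar_eq ha₀ ha ha₀u hau ha₀w haw]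
    · exact ⟨Classical.choice M.dne, fun a ha hau => absurd ⟨a, ha, hau⟩ hu⟩
  choose ρ hρ using hglue
  refine ⟨ρ, fun ⟨a, ha, hholds⟩ => ?_⟩
  by_cases hvar : ∃ u, a.hasVar u
  · obtain ⟨u, hau⟩ := hvar
    obtain ⟨w, p, haw⟩ := Lit.exists_firstVar hau
    refine hρw w (hq.isComponent_withVar ha haw)
      ⟨a, Clause.mem_withVar.mpr ⟨ha, haw.hasVar⟩, ?_⟩
    exact (Lit.holds_congr M fun v hav => hρ v a ha hav w p haw).mp hholds
  · push Not at hvar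
    have hsingle : IsComponent {a} C :=
      ⟨Finset.singleton_nonempty a, Finset.singleton_subset_iff.mpr ha, Or.inl ⟨a, rfl⟩,
        fun x hx _ _ ⟨u, hxu, _⟩ => absurd hxu (Finset.mem_singleton.mp hx ▸ hvar u)⟩
    obtain ⟨ρ₀, hρ₀⟩ := hK _ hsingle
    exact hρ₀ ⟨a, Finset.mem_singleton_self a,
      (Lit.holds_congr M fun v hav => absurd hav (hvar v)).mp hholds⟩

end QEALMClause

/-- If `φ ∧ C` is a satisfiable CNF in the QEALM fragment, then
there is a component `Kc` of `C` such that `φ ∧ Kc` is satisfiable. -/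
theorem statement_4 (φ : CNF V K P) (C : Clause V K P)
    (hq : QEALM (C :: φ)) (hsat : CNF.Satisfiable (C :: φ)) :
    ∃ Kc : Clause V K P, IsComponent Kc C ∧ CNF.Satisfiable (Kc :: φ) := by
  obtain ⟨M, hM⟩ := hsat
  by_contra! hunsat
  have hfalsified : ∀ Kc, IsComponent Kc C → ∃ ρ : V → M.Dom, ¬ Kc.holds M ρ := by
    intro Kc hKc
    by_contra! hKc_holds
    refine hunsat Kc hKc ⟨M, fun ρ D hD => ?_⟩
    rcases List.mem_cons.mp hD with rfl | hDφ
    · exact hKc_holds ρ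
    · exact hM ρ D (List.mem_cons_of_mem _ hDφ)
  obtain ⟨ρ, hρ⟩ :=
    (hq C List.mem_cons_self).exists_not_holds_of_forall_isComponent M hfalsified
  exact hρ (hM ρ C List.mem_cons_self)
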